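/- arXiv:1401.3367 — 2 statements merged into one kernel-verified Lean document; each statement's English description precedes it below -/
import Mathlib

section
/- Let V be a finite-dimensional vector space over K = GF(2) and f : V → V nilpotent, with V = ⟨u_1⟩ ⊕ ⟨u_2⟩, e(u_1) = R, e(u_2) = S, and R + 1 < S. Let s, q be integers with 0 < s < q and 0 ≤ R − s < S − q, and set X = ⟨f^{R−s}(u_1) + f^{S−q}(u_2)⟩^c. Then dim_K X = s + q − 1. Moreover, if s > 1 then X = ⟨f^{R−s}(u_1) + f^{S−q}(u_2)⟩ ⊕ ⟨f^{R−s+1}(u_1)⟩, a direct sum of f-cyclic subspaces of dimensions q and s − 1, and if s = 1 then X = ⟨f^{R−s}(u_1) + f^{S−q}(u_2)⟩ is f-cyclic of dimension q. -/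
open Module LinearMap

section Defs

variable {K V : Type*} [Field K] [AddCommGroup V] [Module K V]

/-- `α` commutes with `f`. -/
def Commutes (f : V →ₗ[K] V) (α : V ≃ₗ[K] V) : Prop :=
  ∀ v, α (f v) = f (α v)

/-- `X` is hyperinvariant: invariant under every endomorphism commuting with `f`. -/
def Hyperinv (f : V →ₗ[K] V) (X : Submodule K V) : Prop :=
  ∀ g : V →ₗ[K] V, (∀ v, g (f v) = f (g v)) → ∀ x ∈ X, g x ∈ X

/-- `X` is characteristic: `f`-invariant and invariant under every automorphism
commuting with `f`. -/
def Charinv (f : V →ₗ[K] V) (X : Submodule K V) : Prop :=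
  (∀ x ∈ X, f x ∈ X) ∧ ∀ α : V ≃ₗ[K] V, Commutes f α → ∀ x ∈ X, α x ∈ X

/-- The characteristic hull of a set `B`: the subspace spanned by all
`f^i (α b)`, `b ∈ B`, `α` an automorphism commuting with `f`. -/
def charHull (f : V →ₗ[K] V) (B : Set V) : Submodule K V :=
  Submodule.span K
    {y | ∃ b ∈ B, ∃ i : ℕ, ∃ α : V ≃ₗ[K] V, Commutes f α ∧ y = (f ^ i) (α b)}

/-- The `f`-cyclic subspace generated by `x`. -/
def cyc (f : V →ₗ[K] V) (x : V) : Submodule K V :=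
  Submodule.span K (Set.range fun i : ℕ => (f ^ i) x)

/-- The `f`-invariant span of a set `B`. -/
def invSpan (f : V →ₗ[K] V) (B : Set V) : Submodule K V :=
  Submodule.span K {y | ∃ b ∈ B, ∃ i : ℕ, y = (f ^ i) b}

/-- The exponent of `x`: the least `ℓ` with `f^ℓ x = 0`. -/
noncomputable def expnt (f : V →ₗ[K] V) (x : V) : ℕ :=
  sInf {ℓ : ℕ | (f ^ ℓ) x = 0}

/-- The height of `x`: the largest `q` with `x ∈ f^q V`. -/
noncomputable def hgt (f : V →ₗ[K] V) (x : V) : ℕ :=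
  sSup {q : ℕ | x ∈ LinearMap.range (f ^ q)}

/-- `u` is a generator of `V`: `V = ⟨u⟩ ⊕ V₂` for some `f`-invariant `V₂`. -/
def IsGenerator (f : V →ₗ[K] V) (u : V) : Prop :=
  u ≠ 0 ∧ ∃ V₂ : Submodule K V, (∀ x ∈ V₂, f x ∈ V₂) ∧ IsCompl (cyc f u) V₂

/-- `(u 0, …, u (m-1))` is a generator tuple of `V`:
`V = ⟨u 0⟩ ⊕ ⋯ ⊕ ⟨u (m-1)⟩` with nondecreasing exponents. -/
def IsGenTuple {m : ℕ} (f : V →ₗ[K] V) (u : Fin m → V) : Prop :=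
  DirectSum.IsInternal (fun i => cyc f (u i)) ∧ Monotone fun i => expnt f (u i)

/-- The Ulm invariant `d(f,r) = dim ((ker f ⊓ f^{r-1} V) / (ker f ⊓ f^r V))`. -/
noncomputable def ulm (f : V →ₗ[K] V) (r : ℕ) : ℕ :=
  Module.finrank K
    (↥(LinearMap.ker f ⊓ LinearMap.range (f ^ (r - 1))) ⧸
      Submodule.comap (LinearMap.ker f ⊓ LinearMap.range (f ^ (r - 1))).subtype
        (LinearMap.ker f ⊓ LinearMap.range (f ^ r)))

/-- The largest hyperinvariant subspace contained in `X`
(the sum of all hyperinvariant subspaces contained in `X`). -/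
noncomputable def largestHyperinv (f : V →ₗ[K] V) (X : Submodule K V) : Submodule K V :=
  sSup {W : Submodule K V | Hyperinv f W ∧ W ≤ X}

end Defs

/-!
Write `x = f^a u₁ + f^b u₂` and `t = f^(a+1) u₁` with `a = R - s`, `b = S - q`.
The automorphism `1 + f ∘ π₁`, where `π₁` projects onto `⟨u₁⟩` along `⟨u₂⟩`, commutes with `f`
and sends `x` to `x + t`, so `⟨x⟩ + ⟨t⟩ ⊆ X`. Conversely, an automorphism `α` commuting with `f`
preserves `ker f^R ⊓ range f ⊂ ker f^R` and `ker f^R ⊔ range f ⊂ V`, both of codimension one with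
quotients spanned by `u₁` and `u₂`; over `GF(2)` it acts trivially on both quotients, which puts
`α x - x` into `⟨t⟩ + ⟨f^(b+1) u₂⟩ ⊆ ⟨x⟩ + ⟨t⟩`. Finally, the projection onto `⟨u₂⟩` maps `⟨x⟩`
onto `⟨f^b u₂⟩`, which has the same dimension `q`, so `⟨x⟩ ∩ ⟨u₁⟩ = 0`.
-/

section Cyclic

variable {K V : Type*} [Field K] [AddCommGroup V] [Module K V] {f : V →ₗ[K] V}

theorem pow_apply_mem_of_mem_invtSubmodule {W : Submodule K V} (hW : W ∈ Module.End.invtSubmodule f)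
    {v : V} (hv : v ∈ W) (i : ℕ) : (f ^ i) v ∈ W := by
  rw [Module.End.coe_pow]
  exact ((Module.End.mem_invtSubmodule_iff_mapsTo f).1 hW).iterate i hv

theorem pow_apply_mem_cyc (f : V →ₗ[K] V) (u : V) (i : ℕ) : (f ^ i) u ∈ cyc f u :=
  Submodule.subset_span ⟨i, rfl⟩

theorem mem_cyc_self (f : V →ₗ[K] V) (u : V) : u ∈ cyc f u := by
  simpa using pow_apply_mem_cyc f u 0

theorem cyc_le {W : Submodule K V} (hW : W ∈ Module.End.invtSubmodule f) {u : V} (hu : u ∈ W) :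
    cyc f u ≤ W :=
  Submodule.span_le.2 <| Set.range_subset_iff.2 <| pow_apply_mem_of_mem_invtSubmodule hW hu

theorem cyc_mem_invtSubmodule (f : V →ₗ[K] V) (u : V) : cyc f u ∈ Module.End.invtSubmodule f := by
  refine (Module.End.mem_invtSubmodule f).2 (Submodule.span_le.2 ?_)
  rintro _ ⟨i, rfl⟩
  simpa [← Module.End.mul_apply, ← pow_succ'] using pow_apply_mem_cyc f u (i + 1)

theorem map_cyc_of_commute {g : V →ₗ[K] V} (h : Commute g f) (u : V) :
    (cyc f u).map g = cyc f (g u) := by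
  rw [cyc, cyc, Submodule.map_span, ← Set.range_comp]
  refine congrArg _ (congrArg Set.range (funext fun i => ?_))
  simp only [Function.comp_apply, ← Module.End.mul_apply, (h.pow_right i).eq]

theorem map_pow_cyc (f : V →ₗ[K] V) (k : ℕ) (u : V) : (cyc f u).map (f ^ k) = cyc f ((f ^ k) u) :=
  map_cyc_of_commute ((Commute.refl f).pow_left k) u

theorem cyc_pow_le_of_le (f : V →ₗ[K] V) (u : V) {j k : ℕ} (h : j ≤ k) :
    cyc f ((f ^ k) u) ≤ cyc f ((f ^ j) u) := by
  rw [← Nat.sub_add_cancel h, pow_add, Module.End.mul_apply]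
  exact cyc_le (cyc_mem_invtSubmodule f _) (pow_apply_mem_cyc f _ _)

theorem cyc_zero (f : V →ₗ[K] V) : cyc f (0 : V) = ⊥ := by
  simp [cyc]

theorem cyc_eq_span_sup_cyc_apply (f : V →ₗ[K] V) (u : V) : cyc f u = K ∙ u ⊔ cyc f (f u) := by
  refine le_antisymm (Submodule.span_le.2 ?_) (sup_le ?_ ?_)
  · rintro _ ⟨_ | i, rfl⟩
    · simpa using Submodule.mem_sup_left (Submodule.mem_span_singleton_self u)
    · simp only [pow_succ, Module.End.mul_apply]
      exact Submodule.mem_sup_right (pow_apply_mem_cyc f (f u) i)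
  · exact (Submodule.span_singleton_le_iff_mem _ _).2 (mem_cyc_self f u)
  · exact cyc_le (cyc_mem_invtSubmodule f u) (by simpa using pow_apply_mem_cyc f u 1)

theorem notMem_cyc_apply (hf : IsNilpotent f) {u : V} (hu : u ≠ 0) : u ∉ cyc f (f u) := by
  intro h
  have hle : cyc f u ≤ (cyc f u).map f := by
    rw [map_cyc_of_commute (Commute.refl f)]
    exact cyc_le (cyc_mem_invtSubmodule f _) h
  have hpow : ∀ n, cyc f u ≤ cyc f ((f ^ n) u) := by
    intro n
    induction n with
    | zero => simp
    | succ n ih =>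
      rw [pow_succ', Module.End.mul_apply, ← map_cyc_of_commute (Commute.refl f)]
      exact hle.trans (Submodule.map_mono ih)
  obtain ⟨n, hn⟩ := hf
  simpa [hn, cyc_zero, hu] using hpow n (mem_cyc_self f u)

end Cyclic

section Exponent

variable {K V : Type*} [Field K] [AddCommGroup V] [Module K V] {f : V →ₗ[K] V}

theorem pow_apply_eq_zero_iff (hf : IsNilpotent f) {x : V} {k : ℕ} :
    (f ^ k) x = 0 ↔ expnt f x ≤ k := by
  refine ⟨fun h => Nat.sInf_le h, fun h => ?_⟩
  have hx : (f ^ expnt f x) x = 0 := by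
    obtain ⟨n, hn⟩ := hf
    exact Nat.sInf_mem (s := {ℓ | (f ^ ℓ) x = 0}) ⟨n, by simp [hn]⟩
  rw [← Nat.sub_add_cancel h, pow_add, Module.End.mul_apply, hx, map_zero]

theorem expnt_eq_of_pow_apply_eq_zero_iff (hf : IsNilpotent f) {x : V} {n : ℕ}
    (h : ∀ k, (f ^ k) x = 0 ↔ n ≤ k) : expnt f x = n :=
  eq_of_forall_ge_iff fun k => (pow_apply_eq_zero_iff hf).symm.trans (h k)

theorem expnt_pow_apply (hf : IsNilpotent f) (x : V) (k : ℕ) :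
    expnt f ((f ^ k) x) = expnt f x - k := by
  refine expnt_eq_of_pow_apply_eq_zero_iff hf fun m => ?_
  rw [← Module.End.mul_apply, ← pow_add, pow_apply_eq_zero_iff hf]
  omega

theorem expnt_apply (hf : IsNilpotent f) (x : V) : expnt f (f x) = expnt f x - 1 := by
  simpa using expnt_pow_apply hf x 1

theorem expnt_add_of_disjoint (hf : IsNilpotent f) {p q : Submodule K V} (hpq : Disjoint p q)
    (hp : p ∈ Module.End.invtSubmodule f) (hq : q ∈ Module.End.invtSubmodule f)
    {v w : V} (hv : v ∈ p) (hw : w ∈ q) : expnt f (v + w) = max (expnt f v) (expnt f w) := by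
  refine expnt_eq_of_pow_apply_eq_zero_iff hf fun k => ?_
  have hvw : (f ^ k) v + (f ^ k) w = 0 ↔ (f ^ k) v = 0 ∧ (f ^ k) w = 0 := by
    refine ⟨fun h => ?_, fun ⟨h₁, h₂⟩ => by rw [h₁, h₂, add_zero]⟩
    have hv' : (f ^ k) v = 0 := Submodule.disjoint_def.1 hpq _
      (pow_apply_mem_of_mem_invtSubmodule hp hv k) (by
        rw [eq_neg_of_add_eq_zero_left h]
        exact q.neg_mem (pow_apply_mem_of_mem_invtSubmodule hq hw k))
    exact ⟨hv', by rwa [hv', zero_add] at h⟩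
  rw [map_add, hvw, pow_apply_eq_zero_iff hf, pow_apply_eq_zero_iff hf, max_le_iff]

theorem ne_zero_of_expnt_pos {x : V} (hx : 0 < expnt f x) : x ≠ 0 := by
  rintro rfl
  have : expnt f (0 : V) = 0 := Nat.sInf_eq_zero.2 (Or.inl (by simp))
  omega

theorem finrank_cyc [FiniteDimensional K V] (hf : IsNilpotent f) (u : V) :
    finrank K (cyc f u) = expnt f u := by
  induction h : expnt f u generalizing u with
  | zero =>
    have hu : u = 0 := by simpa using (pow_apply_eq_zero_iff hf (x := u) (k := 0)).2 h.le
    simp [hu, cyc_zero]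
  | succ e ih =>
    have hu : u ≠ 0 := ne_zero_of_expnt_pos (by rw [h]; omega)
    have hd : Disjoint (cyc f (f u)) (K ∙ u) :=
      (Submodule.disjoint_span_singleton' hu).2 (notMem_cyc_apply hf hu)
    have := Submodule.finrank_sup_add_finrank_inf_eq (K ∙ u) (cyc f (f u))
    rw [← cyc_eq_span_sup_cyc_apply, inf_comm, hd.eq_bot, finrank_bot, finrank_span_singleton hu,
      ih (f u) (by rw [expnt_apply hf, h]; rfl)] at this
    omega

theorem ker_pow_inf_cyc_le (hf : IsNilpotent f) (k : ℕ) (u : V) :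
    ker (f ^ k) ⊓ cyc f u ≤ cyc f ((f ^ (expnt f u - k)) u) := by
  induction h : expnt f u generalizing u with
  | zero => simp
  | succ e ih =>
    rintro v ⟨hv0, hv⟩
    rcases le_or_gt (e + 1) k with hk | hk
    · simpa [Nat.sub_eq_zero_of_le hk] using hv
    rw [SetLike.mem_coe, cyc_eq_span_sup_cyc_apply, Submodule.mem_sup] at hv
    obtain ⟨_, hc, w, hw, rfl⟩ := hv
    obtain ⟨c, rfl⟩ := Submodule.mem_span_singleton.1 hc
    have hkw : (f ^ k) w ∈ cyc f (f ((f ^ k) u)) := by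
      rw [← Module.End.mul_apply, ← pow_succ', pow_succ, Module.End.mul_apply, ← map_pow_cyc]
      exact Submodule.mem_map_of_mem hw
    have hc : c = 0 := by
      by_contra hc
      have hku : (f ^ k) u ≠ 0 := by rw [Ne, pow_apply_eq_zero_iff hf]; omega
      refine notMem_cyc_apply hf hku ?_
      have hv0' : c • (f ^ k) u + (f ^ k) w = 0 := by simpa using hv0
      have hku' : (f ^ k) u = -(c⁻¹ • (f ^ k) w) := by
        rw [← smul_neg, ← eq_neg_of_add_eq_zero_left hv0', inv_smul_smul₀ hc]
      have := Submodule.neg_mem _ (Submodule.smul_mem _ c⁻¹ hkw)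
      rwa [← hku'] at this
    subst hc
    rw [zero_smul, zero_add] at hv0 ⊢
    have := ih (f u) (by rw [expnt_apply hf, h]; rfl) ⟨hv0, hw⟩
    rwa [← Module.End.mul_apply, ← pow_succ, show e - k + 1 = e + 1 - k by omega] at this

end Exponent

section Complements

variable {K V : Type*} [Field K] [AddCommGroup V] [Module K V] {f : V →ₗ[K] V}
  {p q : Submodule K V}

theorem ker_mem_invtSubmodule_of_commute {g h : V →ₗ[K] V} (hgh : Commute g h) :
    ker h ∈ Module.End.invtSubmodule g := fun v hv => by
  rw [Submodule.mem_comap, mem_ker, ← Module.End.mul_apply, ← hgh.eq, Module.End.mul_apply,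
    mem_ker.1 hv, map_zero]

theorem range_mem_invtSubmodule_of_commute {g h : V →ₗ[K] V} (hgh : Commute g h) :
    range h ∈ Module.End.invtSubmodule g := by
  rintro _ ⟨w, rfl⟩
  exact ⟨g w, (LinearMap.congr_fun hgh.eq w).symm⟩

theorem commute_projection (hpq : IsCompl p q) (hp : p ∈ Module.End.invtSubmodule f)
    (hq : q ∈ Module.End.invtSubmodule f) : Commute (p.projection q hpq) f :=
  (LinearMap.IsIdempotentElem.commute_iff (Submodule.isIdempotentElem_projection hpq)).2
    ⟨by rwa [Submodule.range_projection], by rwa [Submodule.ker_projection]⟩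

theorem exists_commutes_apply_eq (hf : IsNilpotent f) (hpq : IsCompl p q)
    (hp : p ∈ Module.End.invtSubmodule f) (hq : q ∈ Module.End.invtSubmodule f) :
    ∃ α : V ≃ₗ[K] V, Commutes f α ∧ ∀ v, α v = v + f (p.projection q hpq v) := by
  have hcomm : Commute (f * p.projection q hpq) f :=
    (Commute.refl f).mul_left (commute_projection hpq hp hq)
  have hunit : IsUnit (1 + f * p.projection q hpq) :=
    ((commute_projection hpq hp hq).symm.isNilpotent_mul_right hf).isUnit_one_add
  refine ⟨LinearMap.GeneralLinearGroup.generalLinearEquiv K V hunit.unit, fun v => ?_,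
    fun _ => rfl⟩
  exact LinearMap.congr_fun ((Commute.one_left f).add_left hcomm).eq v

theorem finrank_sup_of_disjoint [FiniteDimensional K V] (hpq : Disjoint p q) :
    finrank K ↥(p ⊔ q) = finrank K p + finrank K q := by
  have := Submodule.finrank_sup_add_finrank_inf_eq p q
  rwa [hpq.eq_bot, finrank_bot, add_zero] at this

theorem disjoint_ker_of_finrank_map_eq [FiniteDimensional K V] {g : V →ₗ[K] V}
    {C : Submodule K V} (h : finrank K (C.map g) = finrank K C) : Disjoint C (ker g) := by
  rw [← injective_domRestrict_iff, ← ker_eq_bot, ← Submodule.finrank_eq_zero]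
  have := finrank_range_add_finrank_ker (g.domRestrict C)
  rw [range_domRestrict, h] at this
  omega

theorem disjoint_cyc_add [FiniteDimensional K V] (hf : IsNilpotent f) (hpq : IsCompl p q)
    (hp : p ∈ Module.End.invtSubmodule f) (hq : q ∈ Module.End.invtSubmodule f)
    {v w : V} (hv : v ∈ p) (hw : w ∈ q) (hvw : expnt f v ≤ expnt f w) :
    Disjoint (cyc f (v + w)) p := by
  have hπ := commute_projection hpq.symm hq hp
  have hπvw : q.projection p hpq.symm (v + w) = w := by
    simp [Submodule.projection_apply_of_mem_right hpq.symm hv,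
      Submodule.projection_apply_of_mem_left hpq.symm hw]
  simpa using disjoint_ker_of_finrank_map_eq (g := q.projection p hpq.symm) (C := cyc f (v + w))
    (by rw [map_cyc_of_commute hπ, hπvw, finrank_cyc hf, finrank_cyc hf,
      expnt_add_of_disjoint hf hpq.disjoint hp hq hv hw, max_eq_right hvw])

theorem notMem_range_of_isCompl (hf : IsNilpotent f) {u : V} (hpq : IsCompl (cyc f u) q)
    (hq : q ∈ Module.End.invtSubmodule f) (hu : u ≠ 0) : u ∉ range f := by
  rintro ⟨w, hw⟩
  obtain ⟨a, b, ha, hb, rfl⟩ := Submodule.codisjoint_iff_exists_add_eq.1 hpq.codisjoint w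
  have hua : u - f a = 0 := Submodule.disjoint_def'.1 hpq.disjoint (u - f a)
    (Submodule.sub_mem _ (mem_cyc_self f u) ((cyc_mem_invtSubmodule f u) ha)) (f b) (hq hb)
    (by rw [← hw, map_add]; abel)
  refine notMem_cyc_apply hf hu ?_
  rw [← map_cyc_of_commute (Commute.refl f)]
  convert Submodule.mem_map_of_mem (f := f) ha using 1
  exact sub_eq_zero.1 hua

theorem notMem_ker_sup_range {u : V} (hu : f ^ expnt f u = 0) {k : ℕ} (hk : k < expnt f u) :
    u ∉ ker (f ^ k) ⊔ range f := by
  set e := expnt f u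
  intro h
  obtain ⟨a, ha, _, ⟨w, rfl⟩, hsum⟩ := Submodule.mem_sup.1 h
  have hzero : (f ^ (e - 1)) u = 0 := by
    rw [← hsum, map_add, ← Module.End.mul_apply, ← pow_succ, Nat.sub_add_cancel (by omega), hu,
      ← Nat.sub_add_cancel (show k ≤ e - 1 by omega), pow_add, Module.End.mul_apply,
      mem_ker.1 ha, map_zero, zero_add, LinearMap.zero_apply]
  have : e ≤ e - 1 := Nat.sInf_le hzero
  omega

theorem ker_pow_le_sup_cyc (hf : IsNilpotent f) {u₁ u₂ : V}
    (hcompl : IsCompl (cyc f u₁) (cyc f u₂)) {k : ℕ} (hk : expnt f u₁ ≤ k) :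
    ker (f ^ k) ≤ cyc f u₁ ⊔ cyc f ((f ^ (expnt f u₂ - k)) u₂) := by
  intro v hv
  obtain ⟨a, b, ha, hb, rfl⟩ := Submodule.codisjoint_iff_exists_add_eq.1 hcompl.codisjoint v
  have ha' : a ∈ ker (f ^ k) :=
    cyc_le (ker_mem_invtSubmodule_of_commute ((Commute.refl f).pow_right k))
      ((pow_apply_eq_zero_iff hf).2 hk) ha
  have hb' : b ∈ ker (f ^ k) := by simpa using (ker (f ^ k)).sub_mem hv ha'
  exact Submodule.add_mem_sup ha (ker_pow_inf_cyc_le hf k u₂ ⟨hb', hb⟩)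

theorem finrank_cyc_pow_add_pow [FiniteDimensional K V] (hf : IsNilpotent f) {u₁ u₂ : V}
    (hcompl : IsCompl (cyc f u₁) (cyc f u₂)) {a b : ℕ}
    (hab : expnt f u₁ - a ≤ expnt f u₂ - b) :
    finrank K (cyc f ((f ^ a) u₁ + (f ^ b) u₂)) = expnt f u₂ - b := by
  rw [finrank_cyc hf, expnt_add_of_disjoint hf hcompl.disjoint (cyc_mem_invtSubmodule f u₁)
    (cyc_mem_invtSubmodule f u₂) (pow_apply_mem_cyc f u₁ a) (pow_apply_mem_cyc f u₂ b),
    expnt_pow_apply hf, expnt_pow_apply hf, max_eq_right hab]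

theorem disjoint_cyc_pow_add_pow [FiniteDimensional K V] (hf : IsNilpotent f) {u₁ u₂ : V}
    (hcompl : IsCompl (cyc f u₁) (cyc f u₂)) {a b : ℕ}
    (hab : expnt f u₁ - a ≤ expnt f u₂ - b) :
    Disjoint (cyc f ((f ^ a) u₁ + (f ^ b) u₂)) (cyc f ((f ^ (a + 1)) u₁)) := by
  have hp := cyc_mem_invtSubmodule f u₁
  refine (disjoint_cyc_add hf hcompl hp (cyc_mem_invtSubmodule f u₂) (pow_apply_mem_cyc f u₁ a)
    (pow_apply_mem_cyc f u₂ b) ?_).mono_right (cyc_le hp (pow_apply_mem_cyc f u₁ (a + 1)))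
  rwa [expnt_pow_apply hf, expnt_pow_apply hf]

end Complements

section CharacteristicHull

variable {K V : Type*} [Field K] [AddCommGroup V] [Module K V] {f : V →ₗ[K] V} {α : V ≃ₗ[K] V}

theorem Commutes.commute (hα : Commutes f α) : Commute (α : V →ₗ[K] V) f :=
  LinearMap.ext hα

theorem Commutes.symm (hα : Commutes f α) : Commutes f α.symm := fun v =>
  α.injective (by rw [hα, LinearEquiv.apply_symm_apply, LinearEquiv.apply_symm_apply])

theorem Commutes.pow_apply (hα : Commutes f α) (k : ℕ) (v : V) :
    α ((f ^ k) v) = (f ^ k) (α v) :=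
  LinearMap.congr_fun (hα.commute.pow_right k).eq v

theorem apply_mem_charHull {B : Set V} {b : V} (hb : b ∈ B) (hα : Commutes f α) :
    α b ∈ charHull f B :=
  Submodule.subset_span ⟨b, hb, 0, α, hα, by simp⟩

theorem mem_charHull_self {B : Set V} {b : V} (hb : b ∈ B) : b ∈ charHull f B :=
  apply_mem_charHull (α := LinearEquiv.refl K V) hb fun _ => rfl

theorem charHull_mem_invtSubmodule (B : Set V) : charHull f B ∈ Module.End.invtSubmodule f := by
  refine (Module.End.mem_invtSubmodule f).2 (Submodule.span_le.2 ?_)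
  rintro _ ⟨b, hb, i, α, hα, rfl⟩
  exact Submodule.subset_span ⟨b, hb, i + 1, α, hα, by rw [pow_succ', Module.End.mul_apply]⟩

theorem charHull_le {B : Set V} {W : Submodule K V} (hW : W ∈ Module.End.invtSubmodule f)
    (h : ∀ b ∈ B, ∀ α : V ≃ₗ[K] V, Commutes f α → α b ∈ W) : charHull f B ≤ W := by
  refine Submodule.span_le.2 ?_
  rintro _ ⟨b, hb, i, α, hα, rfl⟩
  exact pow_apply_mem_of_mem_invtSubmodule hW (h b hb α hα) i

end CharacteristicHull

section GF2

variable {V : Type*} [AddCommGroup V] [Module (ZMod 2) V]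

theorem mem_or_sub_mem_of_mem_sup_span {M : Submodule (ZMod 2) V} {u v : V}
    (h : v ∈ M ⊔ ZMod 2 ∙ u) : v ∈ M ∨ v - u ∈ M := by
  obtain ⟨m, hm, _, hc, rfl⟩ := Submodule.mem_sup.1 h
  obtain ⟨c, rfl⟩ := Submodule.mem_span_singleton.1 hc
  rcases (by decide : ∀ c : ZMod 2, c = 0 ∨ c = 1) c with rfl | rfl <;> simp [hm]

/-- The hypotheses force `M = M₀` and `N = M ⊕ ⟨u⟩`; over `GF(2)` the automorphism induced by `α`
on the line `N / M` is the identity. -/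
theorem LinearEquiv.apply_sub_self_mem_of_le_sup_span {M₀ M N : Submodule (ZMod 2) V} {u : V}
    (α : V ≃ₗ[ZMod 2] V) (hαM : M ∈ Module.End.invtSubmodule (α : V →ₗ[ZMod 2] V))
    (hαN : N ∈ Module.End.invtSubmodule (α.symm : V →ₗ[ZMod 2] V)) (hM₀ : M₀ ≤ M) (hM : M ≤ N)
    (hN : N ≤ M₀ ⊔ ZMod 2 ∙ u) (hu : u ∈ N) (huM : u ∉ M) : α u - u ∈ M₀ := by
  have hdich : ∀ v ∈ N, v ∈ M₀ ∨ v - u ∈ M₀ := fun v hv =>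
    mem_or_sub_mem_of_mem_sup_span (hN hv)
  have hMM₀ : M ≤ M₀ := fun v hv => (hdich v (hM hv)).resolve_right fun h =>
    huM (by simpa using M.sub_mem hv (hM₀ h))
  apply hMM₀
  rcases hdich _ (hαN hu) with h | h
  · exact absurd (by simpa using hαM (hM₀ h)) huM
  · simpa using M.neg_mem (hαM (hM₀ h))

variable {f : V →ₗ[ZMod 2] V} {u₁ u₂ : V} {α : V ≃ₗ[ZMod 2] V}

theorem Commutes.apply_sub_self_mem_left (hf : IsNilpotent f)
    (hcompl : IsCompl (cyc f u₁) (cyc f u₂)) (hlt : expnt f u₁ < expnt f u₂) (hu₁ : u₁ ≠ 0)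
    (hα : Commutes f α) :
    α u₁ - u₁ ∈ cyc f (f u₁) ⊔ cyc f ((f ^ (expnt f u₂ - expnt f u₁)) u₂) := by
  set R := expnt f u₁
  have hker := ker_mem_invtSubmodule_of_commute ((Commute.refl f).pow_right R)
  have hrange := range_mem_invtSubmodule_of_commute (Commute.refl f)
  refine α.apply_sub_self_mem_of_le_sup_span (M := ker (f ^ R) ⊓ range f) (N := ker (f ^ R))
    (Module.End.invtSubmodule.inf_mem (ker_mem_invtSubmodule_of_commute (hα.commute.pow_right R))
      (range_mem_invtSubmodule_of_commute hα.commute))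
    (ker_mem_invtSubmodule_of_commute (hα.symm.commute.pow_right R)) ?_ inf_le_left ?_
    ((pow_apply_eq_zero_iff hf).2 le_rfl)
    fun h => notMem_range_of_isCompl hf hcompl (cyc_mem_invtSubmodule f u₂) hu₁ h.2
  · refine sup_le (le_inf (cyc_le hker ?_) (cyc_le hrange ⟨u₁, rfl⟩))
      (le_inf (cyc_le hker ?_) (cyc_le hrange ?_))
    · exact (pow_apply_eq_zero_iff hf).2 (by rw [expnt_apply hf]; omega)
    · exact (pow_apply_eq_zero_iff hf).2 (by rw [expnt_pow_apply hf]; omega)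
    · refine ⟨(f ^ (expnt f u₂ - R - 1)) u₂, ?_⟩
      rw [← Module.End.mul_apply, ← pow_succ', Nat.sub_add_cancel (by omega)]
  · refine (ker_pow_le_sup_cyc hf hcompl le_rfl).trans ?_
    rw [cyc_eq_span_sup_cyc_apply f u₁]
    exact le_of_eq (by ac_rfl)

theorem Commutes.apply_sub_self_mem_right (hf : IsNilpotent f)
    (hcompl : IsCompl (cyc f u₁) (cyc f u₂)) (hlt : expnt f u₁ < expnt f u₂)
    (hα : Commutes f α) : α u₂ - u₂ ∈ cyc f u₁ ⊔ cyc f (f u₂) := by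
  set R := expnt f u₁
  have hker := ker_mem_invtSubmodule_of_commute ((Commute.refl f).pow_right R)
  have hS : f ^ expnt f u₂ = 0 := by
    have hkerS := ker_mem_invtSubmodule_of_commute ((Commute.refl f).pow_right (expnt f u₂))
    rw [← ker_eq_top, eq_top_iff, ← hcompl.sup_eq_top]
    exact sup_le (cyc_le hkerS ((pow_apply_eq_zero_iff hf).2 hlt.le))
      (cyc_le hkerS ((pow_apply_eq_zero_iff hf).2 le_rfl))
  refine α.apply_sub_self_mem_of_le_sup_span (M := ker (f ^ R) ⊔ range f) (N := ⊤)
    (Module.End.invtSubmodule.sup_mem (ker_mem_invtSubmodule_of_commute (hα.commute.pow_right R))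
      (range_mem_invtSubmodule_of_commute hα.commute))
    (fun _ _ => Submodule.mem_top) ?_ le_top ?_ Submodule.mem_top (notMem_ker_sup_range hS hlt)
  · exact sup_le ((cyc_le hker ((pow_apply_eq_zero_iff hf).2 le_rfl)).trans le_sup_left)
      ((cyc_le (range_mem_invtSubmodule_of_commute (Commute.refl f)) ⟨u₂, rfl⟩).trans
        le_sup_right)
  · rw [← hcompl.sup_eq_top, cyc_eq_span_sup_cyc_apply f u₂]
    exact le_of_eq (by ac_rfl)

theorem Commutes.apply_sub_self_mem (hf : IsNilpotent f)
    (hcompl : IsCompl (cyc f u₁) (cyc f u₂)) (hu₁ : u₁ ≠ 0) {a b : ℕ} (hab : a < b)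
    (hba : b + expnt f u₁ < a + expnt f u₂) (hα : Commutes f α) :
    α ((f ^ a) u₁ + (f ^ b) u₂) - ((f ^ a) u₁ + (f ^ b) u₂) ∈
      cyc f ((f ^ (a + 1)) u₁) ⊔ cyc f ((f ^ (b + 1)) u₂) := by
  have hlt : expnt f u₁ < expnt f u₂ := by omega
  have h₁ := Submodule.mem_map_of_mem (f := f ^ a) (hα.apply_sub_self_mem_left hf hcompl hlt hu₁)
  have h₂ := Submodule.mem_map_of_mem (f := f ^ b) (hα.apply_sub_self_mem_right hf hcompl hlt)
  simp only [Submodule.map_sup, map_pow_cyc, ← Module.End.mul_apply, ← pow_succ, ← pow_add]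
    at h₁ h₂
  rw [map_add, hα.pow_apply, hα.pow_apply, add_sub_add_comm, ← map_sub, ← map_sub]
  exact Submodule.add_mem _
    (sup_le_sup_left (cyc_pow_le_of_le f u₂ (by omega)) _ h₁)
    (sup_le_sup_right (cyc_pow_le_of_le f u₁ (by omega)) _ h₂)

theorem charHull_eq_sup (hf : IsNilpotent f) (hcompl : IsCompl (cyc f u₁) (cyc f u₂))
    (hu₁ : u₁ ≠ 0) {a b : ℕ} (hab : a < b) (hba : b + expnt f u₁ < a + expnt f u₂) :
    charHull f {(f ^ a) u₁ + (f ^ b) u₂} =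
      cyc f ((f ^ a) u₁ + (f ^ b) u₂) ⊔ cyc f ((f ^ (a + 1)) u₁) := by
  set x := (f ^ a) u₁ + (f ^ b) u₂
  set t := (f ^ (a + 1)) u₁
  have hW := Module.End.invtSubmodule.sup_mem (cyc_mem_invtSubmodule f x)
    (cyc_mem_invtSubmodule f t)
  have hxW : x ∈ cyc f x ⊔ cyc f t := Submodule.mem_sup_left (mem_cyc_self f x)
  have htW : t ∈ cyc f x ⊔ cyc f t := Submodule.mem_sup_right (mem_cyc_self f t)
  have hfx : f x = t + (f ^ (b + 1)) u₂ := by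
    simp only [x, t, map_add, ← Module.End.mul_apply, ← pow_succ']
  have hP : cyc f t ⊔ cyc f ((f ^ (b + 1)) u₂) ≤ cyc f x ⊔ cyc f t :=
    sup_le le_sup_right (cyc_le hW (by
      rw [eq_sub_of_add_eq' hfx.symm]
      exact Submodule.sub_mem _ (hW hxW) htW))
  obtain ⟨α, hα, hαv⟩ := exists_commutes_apply_eq hf hcompl (cyc_mem_invtSubmodule f u₁)
    (cyc_mem_invtSubmodule f u₂)
  have hαx : α x - x = t := by
    rw [hαv, add_sub_cancel_left, map_add,
      Submodule.projection_apply_of_mem_left hcompl (pow_apply_mem_cyc f u₁ a),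
      Submodule.projection_apply_of_mem_right hcompl (pow_apply_mem_cyc f u₂ b), add_zero,
      ← Module.End.mul_apply, ← pow_succ']
  refine le_antisymm (charHull_le hW ?_) (sup_le ?_ ?_)
  · rintro _ rfl α hα
    rw [← sub_add_cancel (α x) x]
    exact Submodule.add_mem _ (hP (hα.apply_sub_self_mem hf hcompl hu₁ hab hba)) hxW
  · exact cyc_le (charHull_mem_invtSubmodule _) (mem_charHull_self rfl)
  · refine cyc_le (charHull_mem_invtSubmodule _) ?_
    rw [← hαx]
    exact Submodule.sub_mem _ (apply_mem_charHull rfl hα) (mem_charHull_self rfl)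

end GF2

theorem stmt12_general (V : Type*) [AddCommGroup V] [Module (ZMod 2) V]
    [FiniteDimensional (ZMod 2) V] (f : V →ₗ[ZMod 2] V) (hf : IsNilpotent f)
    (u₁ u₂ : V) (R S : ℕ) (hcompl : IsCompl (cyc f u₁) (cyc f u₂))
    (he₁ : expnt f u₁ = R) (he₂ : expnt f u₂ = S)
    (s q : ℕ) (hs : 0 < s) (hsq : s < q) (hsR : s ≤ R)
    (hlt : (R : ℤ) - s < (S : ℤ) - q) :
    Module.finrank (ZMod 2)
        ↥(charHull f {(f ^ (R - s)) u₁ + (f ^ (S - q)) u₂}) = s + q - 1 ∧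
      (1 < s →
        charHull f {(f ^ (R - s)) u₁ + (f ^ (S - q)) u₂} =
          cyc f ((f ^ (R - s)) u₁ + (f ^ (S - q)) u₂) ⊔
            cyc f ((f ^ (R - s + 1)) u₁) ∧
        Disjoint (cyc f ((f ^ (R - s)) u₁ + (f ^ (S - q)) u₂))
          (cyc f ((f ^ (R - s + 1)) u₁)) ∧
        Module.finrank (ZMod 2)
          ↥(cyc f ((f ^ (R - s)) u₁ + (f ^ (S - q)) u₂)) = q ∧
        Module.finrank (ZMod 2) ↥(cyc f ((f ^ (R - s + 1)) u₁)) = s - 1) ∧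
      (s = 1 →
        charHull f {(f ^ (R - s)) u₁ + (f ^ (S - q)) u₂} =
          cyc f ((f ^ (R - s)) u₁ + (f ^ (S - q)) u₂) ∧
        Module.finrank (ZMod 2)
          ↥(cyc f ((f ^ (R - s)) u₁ + (f ^ (S - q)) u₂)) = q) := by
  subst he₁ he₂
  have hu₁ : u₁ ≠ 0 := ne_zero_of_expnt_pos (f := f) (by omega)
  have hab : expnt f u₁ - (expnt f u₁ - s) ≤ expnt f u₂ - (expnt f u₂ - q) := by omega
  have hX := charHull_eq_sup hf hcompl hu₁ (a := expnt f u₁ - s) (b := expnt f u₂ - q)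
    (by omega) (by omega)
  have hx := finrank_cyc_pow_add_pow hf hcompl hab
  rw [show expnt f u₂ - (expnt f u₂ - q) = q by omega] at hx
  have ht : finrank (ZMod 2) (cyc f ((f ^ (expnt f u₁ - s + 1)) u₁)) = s - 1 := by
    rw [finrank_cyc hf, expnt_pow_apply hf]
    omega
  have hdisj := disjoint_cyc_pow_add_pow hf hcompl hab
  refine ⟨?_, fun _ => ⟨hX, hdisj, hx, ht⟩, fun hs₁ => ⟨?_, hx⟩⟩
  · rw [hX, finrank_sup_of_disjoint hdisj, hx, ht]
    omega
  · rw [hX, (pow_apply_eq_zero_iff hf (x := u₁) (k := expnt f u₁ - s + 1)).2 (by omega), cyc_zero,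
      sup_bot_eq]

theorem stmt12 (V : Type*) [AddCommGroup V] [Module (ZMod 2) V]
    [FiniteDimensional (ZMod 2) V] (f : V →ₗ[ZMod 2] V) (hf : IsNilpotent f)
    (u₁ u₂ : V) (R S : ℕ) (hcompl : IsCompl (cyc f u₁) (cyc f u₂))
    (he₁ : expnt f u₁ = R) (he₂ : expnt f u₂ = S) (hRS : R + 1 < S)
    (s q : ℕ) (hs : 0 < s) (hsq : s < q) (hsR : s ≤ R)
    (hlt : (R : ℤ) - s < (S : ℤ) - q) :
    Module.finrank (ZMod 2)
        ↥(charHull f {(f ^ (R - s)) u₁ + (f ^ (S - q)) u₂}) = s + q - 1 ∧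
      (1 < s →
        charHull f {(f ^ (R - s)) u₁ + (f ^ (S - q)) u₂} =
          cyc f ((f ^ (R - s)) u₁ + (f ^ (S - q)) u₂) ⊔
            cyc f ((f ^ (R - s + 1)) u₁) ∧
        Disjoint (cyc f ((f ^ (R - s)) u₁ + (f ^ (S - q)) u₂))
          (cyc f ((f ^ (R - s + 1)) u₁)) ∧
        Module.finrank (ZMod 2)
          ↥(cyc f ((f ^ (R - s)) u₁ + (f ^ (S - q)) u₂)) = q ∧
        Module.finrank (ZMod 2) ↥(cyc f ((f ^ (R - s + 1)) u₁)) = s - 1) ∧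
      (s = 1 →
        charHull f {(f ^ (R - s)) u₁ + (f ^ (S - q)) u₂} =
          cyc f ((f ^ (R - s)) u₁ + (f ^ (S - q)) u₂) ∧
        Module.finrank (ZMod 2)
          ↥(cyc f ((f ^ (R - s)) u₁ + (f ^ (S - q)) u₂)) = q) :=
  stmt12_general V f hf u₁ u₂ R S hcompl he₁ he₂ s q hs hsq hsR hlt
end

section
/- Let V_1 and V_2 be f-invariant subspaces of V with V = V_1 ⊕ V_2. Then a subspace X ⊆ V is hyperinvariant (with respect to f) if and only if X is characteristic (with respect to f), X = (X ∩ V_1) ⊕ (X ∩ V_2), and for i = 1, 2 the subspace X ∩ V_i is hyperinvariant in V_i with respect to the restriction f|_{V_i}. -/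
open Module LinearMap

/-!
The projections onto `V₁` along `V₂` and onto `V₂` along `V₁` commute with `f`, so a
hyperinvariant `X` splits along `V = V₁ ⊕ V₂`, and an endomorphism of `V₁` commuting with
`f|V₁` extends by zero on `V₂` to one commuting with `f`. Conversely, write an endomorphism `g`
commuting with `f` as a block matrix with respect to `V₁ ⊕ V₂`. The diagonal blocks commute
with the restrictions of `f`, so they preserve `X ∩ Vᵢ`. An off-diagonal block `h` satisfies
`h² = 0`, so `1 + h` is an automorphism commuting with `f`, and `h x = (1 + h) x - x` stays
in the characteristic subspace `X`.
-/

namespace Submodule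

variable {R M : Type*} [Ring R] [AddCommGroup M] [Module R M] {f : M →ₗ[R] M}
  {p q : Submodule R M}

theorem commute_projection_of_invariant (hp : ∀ x ∈ p, f x ∈ p) (hq : ∀ x ∈ q, f x ∈ q)
    (h : IsCompl p q) : Commute (p.projection q h) f := by
  rw [(isIdempotentElem_projection h).commute_iff, range_projection, ker_projection]
  exact ⟨hp, hq⟩

theorem projectionOnto_map_of_invariant (hp : ∀ x ∈ p, f x ∈ p) (hq : ∀ x ∈ q, f x ∈ q)
    (h : IsCompl p q) (v : M) :
    p.projectionOnto q h (f v) = f.restrict hp (p.projectionOnto q h v) :=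
  Subtype.ext congr($(commute_projection_of_invariant hp hq h) v)

end Submodule

section Hyperinvariant

open Submodule

variable {K V : Type*} [Field K] [AddCommGroup V] [Module K V] {f : V →ₗ[K] V}
  {X V₁ V₂ : Submodule K V}

theorem Hyperinv.charinv (hX : Hyperinv f X) : Charinv f X :=
  ⟨hX f fun _ ↦ rfl, fun α hα ↦ hX α hα⟩

theorem Hyperinv.eq_inf_sup_inf (hX : Hyperinv f X) (hV₁ : ∀ x ∈ V₁, f x ∈ V₁)
    (hV₂ : ∀ x ∈ V₂, f x ∈ V₂) (hcompl : IsCompl V₁ V₂) : X = X ⊓ V₁ ⊔ X ⊓ V₂ := by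
  refine le_antisymm (fun x hx ↦ ?_) (sup_le inf_le_left inf_le_left)
  rw [← projection_add_projection_eq_self hcompl x]
  exact add_mem_sup
    ⟨hX _ (LinearMap.ext_iff.mp (commute_projection_of_invariant hV₁ hV₂ hcompl)) x hx,
      projection_apply_mem _ _⟩
    ⟨hX _ (LinearMap.ext_iff.mp (commute_projection_of_invariant hV₂ hV₁ hcompl.symm)) x hx,
      projection_apply_mem _ _⟩

theorem Hyperinv.comap_subtype (hX : Hyperinv f X) (hV₁ : ∀ x ∈ V₁, f x ∈ V₁)
    (hV₂ : ∀ x ∈ V₂, f x ∈ V₂) (hcompl : IsCompl V₁ V₂) :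
    Hyperinv (f.restrict hV₁) (X.comap V₁.subtype) := by
  intro g hg x hx
  have hext : ∀ v, (V₁.subtype ∘ₗ g ∘ₗ V₁.projectionOnto V₂ hcompl) (f v) =
      f ((V₁.subtype ∘ₗ g ∘ₗ V₁.projectionOnto V₂ hcompl) v) := fun v ↦ by
    simp only [LinearMap.comp_apply, projectionOnto_map_of_invariant hV₁ hV₂ hcompl, hg]
    rfl
  simpa using hX _ hext x hx

theorem Charinv.apply_mem_of_isNilpotent (hX : Charinv f X) {h : V →ₗ[K] V}
    (hnil : IsNilpotent h) (hcomm : Commute h f) {x : V} (hx : x ∈ X) : h x ∈ X := by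
  let α := LinearMap.GeneralLinearGroup.toLinearEquiv hnil.isUnit_one_add.unit
  have hα : Commutes f α := LinearMap.ext_iff.mp ((Commute.one_left f).add_left hcomm)
  have hαx : α x = x + h x := rfl
  simpa [hαx] using X.sub_mem (hX.2 α hα x hx) hx

theorem Charinv.apply_mem_of_mem_inf (hX : Charinv f X) (hV₁ : ∀ x ∈ V₁, f x ∈ V₁)
    (hV₂ : ∀ x ∈ V₂, f x ∈ V₂) (hcompl : IsCompl V₁ V₂)
    (hX₁ : Hyperinv (f.restrict hV₁) (X.comap V₁.subtype)) {g : V →ₗ[K] V}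
    (hg : ∀ v, g (f v) = f (g v)) {x : V} (hx : x ∈ X ⊓ V₁) : g x ∈ X := by
  set P₁ := V₁.projection V₂ hcompl
  set P₂ := V₂.projection V₁ hcompl.symm
  rw [← projection_add_projection_eq_self hcompl (g x)]
  refine X.add_mem ?_ ?_
  · have hcompress : ∀ w, (V₁.projectionOnto V₂ hcompl ∘ₗ g ∘ₗ V₁.subtype) (f.restrict hV₁ w) =
        f.restrict hV₁ ((V₁.projectionOnto V₂ hcompl ∘ₗ g ∘ₗ V₁.subtype) w) := fun w ↦ by
      simp only [LinearMap.comp_apply, ← projectionOnto_map_of_invariant hV₁ hV₂ hcompl, ← hg]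
      rfl
    exact hX₁ _ hcompress ⟨x, hx.2⟩ hx.1
  · have hP₁P₂ : P₁ * P₂ = 0 := LinearMap.ext fun w ↦
      (projection_apply_eq_zero_iff hcompl).mpr (projection_apply_mem _ _)
    have hsq : (P₂ * g * P₁) ^ 2 = 0 := by
      rw [sq, show P₂ * g * P₁ * (P₂ * g * P₁) = P₂ * g * (P₁ * P₂) * g * P₁ by noncomm_ring,
        hP₁P₂]
      simp
    have hcomm : Commute (P₂ * g * P₁) f :=
      ((commute_projection_of_invariant hV₂ hV₁ hcompl.symm).mul_left
        (LinearMap.ext hg)).mul_left (commute_projection_of_invariant hV₁ hV₂ hcompl)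
    simpa [P₁, projection_apply_of_mem_left hcompl hx.2] using
      hX.apply_mem_of_isNilpotent ⟨2, hsq⟩ hcomm hx.1

end Hyperinvariant

theorem stmt13_general {K V : Type*} [Field K] [AddCommGroup V] [Module K V] (f : V →ₗ[K] V)
    (V₁ V₂ : Submodule K V) (hV₁ : ∀ x ∈ V₁, f x ∈ V₁) (hV₂ : ∀ x ∈ V₂, f x ∈ V₂)
    (hcompl : IsCompl V₁ V₂) (X : Submodule K V) :
    Hyperinv f X ↔
      Charinv f X ∧ X = (X ⊓ V₁) ⊔ (X ⊓ V₂) ∧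
        Hyperinv (f.restrict hV₁) (X.comap V₁.subtype) ∧
        Hyperinv (f.restrict hV₂) (X.comap V₂.subtype) := by
  refine ⟨fun hX ↦ ⟨hX.charinv, hX.eq_inf_sup_inf hV₁ hV₂ hcompl,
    hX.comap_subtype hV₁ hV₂ hcompl, hX.comap_subtype hV₂ hV₁ hcompl.symm⟩, ?_⟩
  rintro ⟨hchar, hdec, hX₁, hX₂⟩ g hg x hx
  rw [hdec] at hx
  obtain ⟨x₁, hx₁, x₂, hx₂, rfl⟩ := Submodule.mem_sup.mp hx
  rw [map_add]
  exact X.add_mem (hchar.apply_mem_of_mem_inf hV₁ hV₂ hcompl hX₁ hg hx₁)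
    (hchar.apply_mem_of_mem_inf hV₂ hV₁ hcompl.symm hX₂ hg hx₂)

theorem stmt13 {K V : Type*} [Field K] [AddCommGroup V] [Module K V]
    [FiniteDimensional K V] (f : V →ₗ[K] V) (hf : IsNilpotent f)
    (V₁ V₂ : Submodule K V) (hV₁ : ∀ x ∈ V₁, f x ∈ V₁) (hV₂ : ∀ x ∈ V₂, f x ∈ V₂)
    (hcompl : IsCompl V₁ V₂) (X : Submodule K V) :
    Hyperinv f X ↔
      Charinv f X ∧ X = (X ⊓ V₁) ⊔ (X ⊓ V₂) ∧
        Hyperinv (f.restrict hV₁) (X.comap V₁.subtype) ∧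
        Hyperinv (f.restrict hV₂) (X.comap V₂.subtype) :=
  stmt13_general f V₁ V₂ hV₁ hV₂ hcompl X
end
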